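/- Suppose two finite turn-based stochastic games G and G' are related by a weak bisimulation R respecting the observable labeling, and suppose for all (s,s') ∈ R the one-step-matched optimal until-values agree on endpoints of matched weak steps. Then for all (s,s') ∈ R, the optimal unbounded-until values for observable target and safe sets agree: v_G(s) = v_{G'}(s'). -/

import Mathlib

open Finset

namespace Finset

variable {α β γ : Type*}

theorem sup'_eq_sup'_of_equiv [SemilatticeSup γ] {s : Finset α} {t : Finset β}
    (hs : s.Nonempty) (ht : t.Nonempty) {f : α → γ} {g : β → γ} (e : s ≃ t)
    (h : ∀ a : s, f a = g (e a)) : s.sup' hs f = t.sup' ht g := by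
  refine le_antisymm (sup'_le hs f fun a ha => ?_) (sup'_le ht g fun b hb => ?_)
  · rw [h ⟨a, ha⟩]
    exact le_sup' g (e ⟨a, ha⟩).2
  · simpa [h] using le_sup' f (e.symm ⟨b, hb⟩).2

theorem inf'_eq_inf'_of_equiv [SemilatticeInf γ] {s : Finset α} {t : Finset β}
    (hs : s.Nonempty) (ht : t.Nonempty) {f : α → γ} {g : β → γ} (e : s ≃ t)
    (h : ∀ a : s, f a = g (e a)) : s.inf' hs f = t.inf' ht g :=
  sup'_eq_sup'_of_equiv (γ := γᵒᵈ) hs ht e h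

theorem ite_sup'_inf'_eq_of_equiv [Lattice γ] {P P' : Prop} [Decidable P] [Decidable P']
    {s : Finset α} {t : Finset β} (hs : s.Nonempty) (ht : t.Nonempty) {f : α → γ} {g : β → γ}
    (hP : P ↔ P') (e : s ≃ t) (h : ∀ a : s, f a = g (e a)) :
    (if P then s.sup' hs f else s.inf' hs f) = if P' then t.sup' ht g else t.inf' ht g := by
  simp only [hP, sup'_eq_sup'_of_equiv hs ht e h, inf'_eq_inf'_of_equiv hs ht e h]

end Finset

theorem weak_bisim_preserves_until_values_general
    {S S' : Type*} [Fintype S]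
    (A B : Set S) (A' B' : Set S')
    (W : S → Finset (ℝ × S)) (W' : S' → Finset (ℝ × S'))
    (maxPlayer : S → Prop) [DecidablePred maxPlayer]
    (maxPlayer' : S' → Prop) [DecidablePred maxPlayer']
    (ρ : S → ℕ)
    (hrank : ∀ s p t, (p, t) ∈ W s → ρ s < ρ t)
    (hne : ∀ s, s ∈ A → s ∉ B → (W s).Nonempty)
    (hne' : ∀ s', s' ∈ A' → s' ∉ B' → (W' s').Nonempty)
    (R : S → S' → Prop)
    -- related states have the same controlling player and agree on membership in A and B
    (hplayer : ∀ s s', R s s' → (maxPlayer s ↔ maxPlayer' s'))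
    (hA : ∀ s s', R s s' → (s ∈ A ↔ s' ∈ A'))
    (hB : ∀ s s', R s s' → (s ∈ B ↔ s' ∈ B'))
    -- weak steps from s are in probability-preserving bijection with steps from s',
    -- with successors again related by R
    (hmatch : ∀ s s', R s s' →
      ∃ e : {m // m ∈ W s} ≃ {m // m ∈ W' s'},
        ∀ m : {m // m ∈ W s},
          (e m).1.1 = m.1.1 ∧ R m.1.2 (e m).1.2)
    (v : S → ℝ) (v' : S' → ℝ)
    (hvB : ∀ s ∈ B, v s = 1) (hvOut : ∀ s, s ∉ A ∪ B → v s = 0)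
    (hv : ∀ s (h1 : s ∈ A) (h2 : s ∉ B),
      v s = if maxPlayer s then (W s).sup' (hne s h1 h2) (fun m => m.1 * v m.2)
            else (W s).inf' (hne s h1 h2) (fun m => m.1 * v m.2))
    (hv'B : ∀ s' ∈ B', v' s' = 1) (hv'Out : ∀ s', s' ∉ A' ∪ B' → v' s' = 0)
    (hv' : ∀ s' (h1 : s' ∈ A') (h2 : s' ∉ B'),
      v' s' = if maxPlayer' s' then (W' s').sup' (hne' s' h1 h2) (fun m => m.1 * v' m.2)
              else (W' s').inf' (hne' s' h1 h2) (fun m => m.1 * v' m.2)) :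
    ∀ s s', R s s' → v s = v' s' := by
  obtain ⟨N, hN⟩ : ∃ N, ∀ s, ρ s ≤ N := ⟨univ.sup ρ, fun s => le_sup (mem_univ s)⟩
  intro s s' hR
  -- ranks increase strictly along steps and are bounded by `N`, so `N - ρ` decreases
  induction hk : N - ρ s using Nat.strong_induction_on generalizing s s' with
  | _ k ih =>
  have hA := hA s s' hR
  have hB := hB s s' hR
  by_cases hsB : s ∈ B
  · rw [hvB s hsB, hv'B s' (hB.mp hsB)]
  by_cases hsA : s ∈ A
  · obtain ⟨e, he⟩ := hmatch s s' hR
    rw [hv s hsA hsB, hv' s' (hA.mp hsA) (by rwa [← hB])]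
    refine ite_sup'_inf'_eq_of_equiv _ _ (hplayer s s' hR) e fun m => ?_
    obtain ⟨hp, hRm⟩ := he m
    have hlt : N - ρ m.1.2 < k := by
      have : ρ s < ρ m.1.2 := hrank s m.1.1 m.1.2 m.2
      have := hN m.1.2
      omega
    rw [hp, ih _ hlt _ _ hRm rfl]
  · rw [hvOut s (by simp [hsA, hsB]), hv'Out s' (by simp [← hA, ← hB, hsA, hsB])]

/-- Two finite well-founded turn-based stochastic games related by a weak
bisimulation `R` respecting the observable labeling (same controlling player, same membership in
the target set `B` and safe set `A`), whose (compressed) weak steps are in probability-preserving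
bijection, have equal optimal unbounded-until values on related states: `v s = v' s'`. -/
theorem weak_bisim_preserves_until_values
    {S S' : Type*} [Fintype S] [Fintype S']
    (A B : Set S) (A' B' : Set S')
    (W : S → Finset (ℝ × S)) (W' : S' → Finset (ℝ × S'))
    (maxPlayer : S → Prop) [DecidablePred maxPlayer]
    (maxPlayer' : S' → Prop) [DecidablePred maxPlayer']
    (ρ : S → ℕ) (ρ' : S' → ℕ)
    (hrank : ∀ s p t, (p, t) ∈ W s → ρ s < ρ t)
    (hrank' : ∀ s' p t', (p, t') ∈ W' s' → ρ' s' < ρ' t')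
    (hne : ∀ s, s ∈ A → s ∉ B → (W s).Nonempty)
    (hne' : ∀ s', s' ∈ A' → s' ∉ B' → (W' s').Nonempty)
    (R : S → S' → Prop)
    -- related states have the same controlling player and agree on membership in A and B
    (hplayer : ∀ s s', R s s' → (maxPlayer s ↔ maxPlayer' s'))
    (hA : ∀ s s', R s s' → (s ∈ A ↔ s' ∈ A'))
    (hB : ∀ s s', R s s' → (s ∈ B ↔ s' ∈ B'))
    -- weak steps from s are in probability-preserving bijection with steps from s',
    -- with successors again related by R
    (hmatch : ∀ s s', R s s' →
      ∃ e : {m // m ∈ W s} ≃ {m // m ∈ W' s'},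
        ∀ m : {m // m ∈ W s},
          (e m).1.1 = m.1.1 ∧ R m.1.2 (e m).1.2)
    (v : S → ℝ) (v' : S' → ℝ)
    (hvB : ∀ s ∈ B, v s = 1) (hvOut : ∀ s, s ∉ A ∪ B → v s = 0)
    (hv : ∀ s (h1 : s ∈ A) (h2 : s ∉ B),
      v s = if maxPlayer s then (W s).sup' (hne s h1 h2) (fun m => m.1 * v m.2)
            else (W s).inf' (hne s h1 h2) (fun m => m.1 * v m.2))
    (hv'B : ∀ s' ∈ B', v' s' = 1) (hv'Out : ∀ s', s' ∉ A' ∪ B' → v' s' = 0)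
    (hv' : ∀ s' (h1 : s' ∈ A') (h2 : s' ∉ B'),
      v' s' = if maxPlayer' s' then (W' s').sup' (hne' s' h1 h2) (fun m => m.1 * v' m.2)
              else (W' s').inf' (hne' s' h1 h2) (fun m => m.1 * v' m.2)) :
    ∀ s s', R s s' → v s = v' s' :=
  weak_bisim_preserves_until_values_general A B A' B' W W' maxPlayer maxPlayer' ρ hrank hne hne' R
    hplayer hA hB hmatch v v' hvB hvOut hv hv'B hv'Out hv'
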